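/- arXiv:2512.11604 — 3 statements merged into one kernel-verified Lean document; each statement's English description precedes it below -/
import Mathlib

section
/- Let g be a complex Lie algebra with anti-linear involution σ and q a complex Lie subalgebra with σ-extension q' (the largest complex Lie subalgebra with q ⊆ q' ⊆ q + σ(q)). If Z ∈ σ(q) \ q has finite Levi-order k ≥ 1 and (Z₁,…,Z_k) is a minimal-length Levi-sequence for Z, then each Z_i lies in q \ σ(q). -/
variable {L : Type*} [LieRing L] [LieAlgebra ℂ L]

/-- Membership in `q + σ(q)`. -/
def memSumConj (σ : L → L) (q : LieSubalgebra ℂ L) (y : L) : Prop :=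
  ∃ a ∈ q, ∃ b ∈ q, y = a + σ b

/-- `(Z₁,…,Z_k)` is a Levi-sequence for `Z`: all `Z_i ∈ q` and the left-normed iterated
bracket `[Z, Z₁, …, Z_k]` does not lie in `q + σ(q)`. -/
def IsLeviSeq (σ : L → L) (q : LieSubalgebra ℂ L) (Z : L) {k : ℕ} (W : Fin k → L) : Prop :=
  (∀ i, W i ∈ q) ∧ ¬ memSumConj σ q ((List.ofFn W).foldl (fun a b => ⁅a, b⁆) Z)

/-!
Suppose `σ(Zᵢ) ∈ q`. By minimality, every iterated bracket of `Z` with fewer than `k` entries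
from `q` lies in `q + σ(q)`; since swapping two neighbouring entries changes an iterated bracket,
by the Jacobi identity, by one with an entry fewer, `[Z, Z₁, …, Z_k]` agrees modulo `q + σ(q)`
with the bracket in which `Zᵢ` is moved to the end. That bracket is `[Y, Zᵢ]` with
`Y ∈ q + σ(q)`, and `q + σ(q)` is stable under `ad Zᵢ` because `Zᵢ ∈ q ∩ σ(q)`. So
`[Z, Z₁, …, Z_k] ∈ q + σ(q)`, contradicting that `(Z₁, …, Z_k)` is a Levi-sequence.
-/

section IteratedBracket

variable {R M : Type*} [CommRing R] [LieRing M] [LieAlgebra R M]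

theorem foldl_lie_add (x y : M) (l : List M) :
    l.foldl (fun a b => ⁅a, b⁆) (x + y)
      = l.foldl (fun a b => ⁅a, b⁆) x + l.foldl (fun a b => ⁅a, b⁆) y := by
  induction l generalizing x y with
  | nil => rfl
  | cons u t ih => simp only [List.foldl_cons, add_lie, ih]

theorem foldl_lie_append_swap (Z w v : M) (l m : List M) :
    (l ++ w :: v :: m).foldl (fun a b => ⁅a, b⁆) Z
      = (l ++ v :: w :: m).foldl (fun a b => ⁅a, b⁆) Z
        + (l ++ ⁅w, v⁆ :: m).foldl (fun a b => ⁅a, b⁆) Z := by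
  simp only [List.foldl_append, List.foldl_cons]
  rw [← foldl_lie_add]
  congr 1
  rw [lie_lie, ← lie_skew w ⁅l.foldl (fun a b => ⁅a, b⁆) Z, v⁆]
  abel

theorem foldl_lie_sub_moveLast_mem (q : LieSubalgebra R M) (S : AddSubgroup M) (Z : M) {n : ℕ}
    (hshort : ∀ l : List M, (∀ x ∈ l, x ∈ q) → l.length < n →
      l.foldl (fun a b => ⁅a, b⁆) Z ∈ S)
    (m : List M) : ∀ (l : List M) (w : M), (∀ x ∈ l, x ∈ q) → (∀ x ∈ m, x ∈ q) → w ∈ q →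
      l.length + 1 + m.length ≤ n →
      (l ++ w :: m).foldl (fun a b => ⁅a, b⁆) Z
        - (l ++ m ++ [w]).foldl (fun a b => ⁅a, b⁆) Z ∈ S := by
  induction m with
  | nil => intros; simp [S.zero_mem]
  | cons v m ih =>
    intro l w hl hm hw hlen
    have hv : v ∈ q := hm v List.mem_cons_self
    have hbracket : (l ++ ⁅w, v⁆ :: m).foldl (fun a b => ⁅a, b⁆) Z ∈ S := by
      refine hshort _ ?_ (by simp only [List.length_cons, List.length_append] at hlen ⊢; omega)
      simp only [List.mem_append, List.mem_cons]
      rintro x (hx | rfl | hx)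
      exacts [hl x hx, q.lie_mem hw hv, hm x (List.mem_cons_of_mem v hx)]
    have hmoved := ih (l ++ [v]) w (by simpa [or_imp, forall_and] using ⟨hl, hv⟩)
      (fun x hx => hm x (List.mem_cons_of_mem v hx)) hw
      (by simp only [List.length_append, List.length_cons, List.length_nil] at hlen ⊢; omega)
    simp only [List.append_assoc, List.cons_append] at hmoved
    rw [foldl_lie_append_swap]
    simpa [List.append_assoc, add_sub_right_comm] using S.add_mem hmoved hbracket

theorem foldl_lie_sub_eraseIdx_append_mem (q : LieSubalgebra R M) (S : AddSubgroup M) (Z : M)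
    {n : ℕ} (hshort : ∀ l : List M, (∀ x ∈ l, x ∈ q) → l.length < n →
      l.foldl (fun a b => ⁅a, b⁆) Z ∈ S)
    (F : List M) (hF : ∀ x ∈ F, x ∈ q) (hlen : F.length ≤ n) (i : ℕ) (hi : i < F.length) :
    F.foldl (fun a b => ⁅a, b⁆) Z - (F.eraseIdx i ++ [F[i]]).foldl (fun a b => ⁅a, b⁆) Z ∈ S := by
  have hsplit : F = F.take i ++ F[i] :: F.drop (i + 1) := by
    rw [← List.drop_eq_getElem_cons hi, List.take_append_drop]
  have hmove := foldl_lie_sub_moveLast_mem q S Z hshort (F.drop (i + 1)) (F.take i) F[i]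
    (fun x hx => hF x (List.mem_of_mem_take hx)) (fun x hx => hF x (List.mem_of_mem_drop hx))
    (hF _ (List.getElem_mem hi)) (by simp only [List.length_take, List.length_drop]; omega)
  rwa [← hsplit, ← List.eraseIdx_eq_take_drop_succ] at hmove

end IteratedBracket

def sumConj (σ : L →+ L) (q : LieSubalgebra ℂ L) : AddSubgroup L :=
  q.toSubmodule.toAddSubgroup ⊔ q.toSubmodule.toAddSubgroup.map σ

theorem mem_sumConj {σ : L →+ L} {q : LieSubalgebra ℂ L} {y : L} :
    y ∈ sumConj σ q ↔ memSumConj σ q y := by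
  simp only [sumConj, AddSubgroup.mem_sup, AddSubgroup.mem_map, memSumConj]
  constructor
  · rintro ⟨a, ha, _, ⟨b, hb, rfl⟩, rfl⟩
    exact ⟨a, ha, b, hb, rfl⟩
  · rintro ⟨a, ha, b, hb, rfl⟩
    exact ⟨a, ha, σ b, ⟨b, hb, rfl⟩, rfl⟩

theorem lie_mem_sumConj {σ : L →+ L} (hbr : ∀ x y : L, σ ⁅x, y⁆ = ⁅σ x, σ y⁆)
    (hinv : ∀ x : L, σ (σ x) = x) {q : LieSubalgebra ℂ L} {y w : L} (hy : y ∈ sumConj σ q)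
    (hw : w ∈ q) (hσw : σ w ∈ q) : ⁅y, w⁆ ∈ sumConj σ q := by
  obtain ⟨a, ha, b, hb, rfl⟩ := mem_sumConj.1 hy
  refine mem_sumConj.2 ⟨⁅a, w⁆, q.lie_mem ha hw, ⁅b, σ w⁆, q.lie_mem hb hσw, ?_⟩
  rw [hbr, hinv, add_lie]

theorem memSumConj_foldl_of_length_lt {σ : L → L} {q : LieSubalgebra ℂ L} {Z : L} {k : ℕ}
    (hmin : ∀ j : ℕ, j < k → ∀ W' : Fin j → L, ¬ IsLeviSeq σ q Z W') (l : List L)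
    (hl : ∀ x ∈ l, x ∈ q) (hlen : l.length < k) :
    memSumConj σ q (l.foldl (fun a b => ⁅a, b⁆) Z) := by
  by_contra hnot
  exact hmin l.length hlen l.get ⟨fun i => hl _ (List.get_mem l i), by rwa [List.ofFn_get]⟩

theorem leviSeq_entries_not_in_conj_general
    (σ : L → L)
    (hadd : ∀ x y : L, σ (x + y) = σ x + σ y)
    (hbr : ∀ x y : L, σ ⁅x, y⁆ = ⁅σ x, σ y⁆)
    (hinv : ∀ x : L, σ (σ x) = x)
    (q : LieSubalgebra ℂ L)
    (Z : L)
    (k : ℕ) (W : Fin k → L)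
    (hW : IsLeviSeq σ q Z W)
    (hmin : ∀ j : ℕ, j < k → ∀ W' : Fin j → L, ¬ IsLeviSeq σ q Z W') :
    ∀ i : Fin k, W i ∈ q ∧ σ (W i) ∉ q := by
  set σ' : L →+ L := AddMonoidHom.mk' σ hadd
  intro i
  refine ⟨hW.1 i, fun hσ => hW.2 (mem_sumConj (σ := σ').1 ?_)⟩
  have hshort : ∀ l : List L, (∀ x ∈ l, x ∈ q) → l.length < k →
      l.foldl (fun a b => ⁅a, b⁆) Z ∈ sumConj σ' q :=
    fun l hl hlen => mem_sumConj.2 (memSumConj_foldl_of_length_lt hmin l hl hlen)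
  set F := List.ofFn W
  have hF : ∀ x ∈ F, x ∈ q := by simpa [F] using hW.1
  have hi : (i : ℕ) < F.length := by simp [F]
  have hFi : F[(i : ℕ)] = W i := List.getElem_ofFn hi
  have hmove := foldl_lie_sub_eraseIdx_append_mem q _ Z hshort F hF (by simp [F]) i hi
  have hlast : (F.eraseIdx i ++ [F[(i : ℕ)]]).foldl (fun a b => ⁅a, b⁆) Z ∈ sumConj σ' q := by
    rw [List.foldl_concat, hFi]
    refine lie_mem_sumConj hbr hinv (hshort _ ?_ ?_) (hW.1 i) hσ
    · exact fun x hx => hF x (List.mem_of_mem_eraseIdx hx)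
    · rw [List.length_eraseIdx_of_lt hi, List.length_ofFn]; omega
  simpa using add_mem hmove hlast

/-- if `Z ∈ σ(q) \ q` has finite Levi-order `k ≥ 1` and `(Z₁,…,Z_k)` is a
minimal-length Levi-sequence for `Z`, then each `Z_i` lies in `q \ σ(q)`. -/
theorem leviSeq_entries_not_in_conj
    (σ : L → L)
    (hadd : ∀ x y : L, σ (x + y) = σ x + σ y)
    (hsmul : ∀ (c : ℂ) (x : L), σ (c • x) = (starRingEnd ℂ) c • σ x)
    (hbr : ∀ x y : L, σ ⁅x, y⁆ = ⁅σ x, σ y⁆)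
    (hinv : ∀ x : L, σ (σ x) = x)
    (q : LieSubalgebra ℂ L)
    (Z : L) (hZmem : σ Z ∈ q) (hZnot : Z ∉ q)
    (k : ℕ) (hk : 1 ≤ k) (W : Fin k → L)
    (hW : IsLeviSeq σ q Z W)
    (hmin : ∀ j : ℕ, j < k → ∀ W' : Fin j → L, ¬ IsLeviSeq σ q Z W') :
    ∀ i : Fin k, W i ∈ q ∧ σ (W i) ∉ q :=
  leviSeq_entries_not_in_conj_general σ hadd hbr hinv q Z k W hW hmin
end

section
/- Let g be a complex Lie algebra with anti-linear involution σ, and q a complex parabolic Lie subalgebra. Define k(g,q) := { Z ∈ q : [Z, σ(q)] ⊆ q + σ(q) } (the Levi-kernel). Then k(g,q) is a Lie subalgebra of g, and k(g,q) + σ(k(g,q)) is also a Lie subalgebra of g satisfying q ∩ σ(q) ⊆ k(g,q) + σ(k(g,q)) ⊆ q + σ(q). -/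
variable {L : Type*} [LieRing L] [LieAlgebra ℂ L]

/-- The Levi-kernel `k(g,q) = { Z ∈ q : [Z, σ(q)] ⊆ q + σ(q) }`. -/
def leviKernel (σ : L → L) (q : LieSubalgebra ℂ L) : Set L :=
  {Z | Z ∈ q ∧ ∀ w ∈ q, memSumConj σ q ⁅Z, σ w⁆}

/-- The set `k(g,q) + σ(k(g,q))`. -/
def leviKernelSum (σ : L → L) (q : LieSubalgebra ℂ L) : Set L :=
  {x | ∃ a ∈ leviKernel σ q, ∃ b ∈ leviKernel σ q, x = a + σ b}

/-!
Let `S = q + σ(q)` and let `T = {x | ⁅x, S⁆ ⊆ S}` be its stabilizer, a Lie subalgebra stable under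
`σ`. Then `k(g,q) = q ∩ T`, and `k(g,q) + σ(k(g,q)) = T ∩ S`: if `u + σ v ∈ T` with `u, v ∈ q`, then
`u ∈ T`, and applying this to `σ (u + σ v) = v + σ u` gives `v ∈ T`. Since `T` stabilizes `S`, the
intersection `T ∩ S` is closed under brackets.
-/

namespace Submodule

variable {R M : Type*} [CommRing R] [LieRing M] [LieAlgebra R M] (S : Submodule R M)

def lieStabilizer : LieSubalgebra R M where
  carrier := {x | ∀ s ∈ S, ⁅x, s⁆ ∈ S}
  add_mem' hx hy s hs := by rw [add_lie]; exact S.add_mem (hx s hs) (hy s hs)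
  zero_mem' s _ := by rw [zero_lie]; exact S.zero_mem
  smul_mem' c _ hx s hs := by rw [smul_lie]; exact S.smul_mem c (hx s hs)
  lie_mem' hx hy s hs := by rw [lie_lie]; exact S.sub_mem (hx _ (hy s hs)) (hy _ (hx s hs))

theorem mem_lieStabilizer {x : M} : x ∈ S.lieStabilizer ↔ ∀ s ∈ S, ⁅x, s⁆ ∈ S :=
  Iff.rfl

def lieStabilizerInf : LieSubalgebra R M where
  toSubmodule := S.lieStabilizer.toSubmodule ⊓ S
  lie_mem' hx hy := ⟨S.lieStabilizer.lie_mem hx.1 hy.1, hx.1 _ hy.2⟩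

theorem mem_lieStabilizerInf {x : M} : x ∈ S.lieStabilizerInf ↔ x ∈ S.lieStabilizer ∧ x ∈ S :=
  Iff.rfl

end Submodule

section Conj

variable {R M : Type*} [CommRing R] [LieRing M] [LieAlgebra R M] {τ : R →+* R} (σ : M →ₛₗ[τ] M)

theorem map_mem_lieStabilizer (hbr : ∀ x y, σ ⁅x, y⁆ = ⁅σ x, σ y⁆) (hinv : ∀ x, σ (σ x) = x)
    {S : Submodule R M} (hS : ∀ s ∈ S, σ s ∈ S) :
    ∀ x ∈ S.lieStabilizer, σ x ∈ S.lieStabilizer := fun x hx s hs => by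
  simpa only [hbr, hinv] using hS _ (hx _ (hS s hs))

variable [RingHomSurjective τ] (q : LieSubalgebra R M)

def LieSubalgebra.supMap : Submodule R M :=
  q.toSubmodule ⊔ q.toSubmodule.map σ

variable {σ q}

theorem LieSubalgebra.mem_supMap {y : M} : y ∈ q.supMap σ ↔ ∃ a ∈ q, ∃ b ∈ q, y = a + σ b := by
  simp only [LieSubalgebra.supMap, Submodule.mem_sup, Submodule.mem_map,
    LieSubalgebra.mem_toSubmodule]
  constructor
  · rintro ⟨a, ha, _, ⟨b, hb, rfl⟩, rfl⟩
    exact ⟨a, ha, b, hb, rfl⟩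
  · rintro ⟨a, ha, b, hb, rfl⟩
    exact ⟨a, ha, _, ⟨b, hb, rfl⟩, rfl⟩

theorem LieSubalgebra.mem_supMap_of_mem {x : M} (hx : x ∈ q) : x ∈ q.supMap σ :=
  Submodule.mem_sup_left hx

theorem LieSubalgebra.map_mem_supMap {x : M} (hx : x ∈ q) : σ x ∈ q.supMap σ :=
  Submodule.mem_sup_right (Submodule.mem_map_of_mem hx)

theorem LieSubalgebra.map_mem_supMap_of_mem_supMap (hinv : ∀ x, σ (σ x) = x) :
    ∀ y ∈ q.supMap σ, σ y ∈ q.supMap σ := by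
  intro y hy
  obtain ⟨a, ha, b, hb, rfl⟩ := q.mem_supMap.1 hy
  exact q.mem_supMap.2 ⟨b, hb, a, ha, by rw [map_add, hinv, add_comm]⟩

theorem mem_lieStabilizer_of_mem_of_map_mem (hbr : ∀ x y, σ ⁅x, y⁆ = ⁅σ x, σ y⁆)
    (hinv : ∀ x, σ (σ x) = x) {x : M} (hx : x ∈ q) (hσx : σ x ∈ q) :
    x ∈ (q.supMap σ).lieStabilizer := by
  intro s hs
  obtain ⟨p, hp, r, hr, rfl⟩ := q.mem_supMap.1 hs
  have h : ⁅x, p + σ r⁆ = ⁅x, p⁆ + σ ⁅σ x, r⁆ := by rw [lie_add, hbr, hinv]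
  rw [h]
  exact add_mem (q.mem_supMap_of_mem (q.lie_mem hx hp)) (q.map_mem_supMap (q.lie_mem hσx hr))

theorem mem_lieStabilizer_of_add_map_mem (hbr : ∀ x y, σ ⁅x, y⁆ = ⁅σ x, σ y⁆) {u v : M}
    (hu : u ∈ q) (hv : v ∈ q) (h : u + σ v ∈ (q.supMap σ).lieStabilizer) :
    u ∈ (q.supMap σ).lieStabilizer := by
  intro s hs
  obtain ⟨p, hp, r, hr, rfl⟩ := q.mem_supMap.1 hs
  have h' : ⁅u, p + σ r⁆ = ⁅u, p⁆ + (⁅u + σ v, σ r⁆ - σ ⁅v, r⁆) := by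
    rw [hbr, lie_add, add_lie]
    abel
  rw [h']
  exact add_mem (q.mem_supMap_of_mem (q.lie_mem hu hp))
    (sub_mem (h _ (q.map_mem_supMap hr)) (q.map_mem_supMap (q.lie_mem hv hr)))

end Conj

section Levi

variable (σ : L →ₗ⋆[ℂ] L) (q : LieSubalgebra ℂ L)

theorem memSumConj_iff {y : L} : memSumConj σ q y ↔ y ∈ q.supMap σ :=
  q.mem_supMap.symm

theorem leviKernel_eq : leviKernel σ q = ↑(q ⊓ (q.supMap σ).lieStabilizer) := by
  ext x
  simp only [SetLike.mem_coe, LieSubalgebra.mem_inf, Submodule.mem_lieStabilizer]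
  constructor
  · rintro ⟨hx, hk⟩
    refine ⟨hx, fun s hs => ?_⟩
    obtain ⟨p, hp, r, hr, rfl⟩ := q.mem_supMap.1 hs
    rw [lie_add]
    exact add_mem (q.mem_supMap_of_mem (q.lie_mem hx hp)) (q.mem_supMap.2 (hk r hr))
  · rintro ⟨hx, hT⟩
    exact ⟨hx, fun w hw => q.mem_supMap.1 (hT _ (q.map_mem_supMap hw))⟩

theorem leviKernelSum_eq (hbr : ∀ x y, σ ⁅x, y⁆ = ⁅σ x, σ y⁆) (hinv : ∀ x, σ (σ x) = x) :
    leviKernelSum σ q = ↑(q.supMap σ).lieStabilizerInf := by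
  have hσT := map_mem_lieStabilizer σ hbr hinv (q.map_mem_supMap_of_mem_supMap hinv)
  ext x
  rw [SetLike.mem_coe, Submodule.mem_lieStabilizerInf]
  constructor
  · rintro ⟨a, ha, b, hb, rfl⟩
    rw [leviKernel_eq, SetLike.mem_coe, LieSubalgebra.mem_inf] at ha hb
    exact ⟨add_mem ha.2 (hσT b hb.2), q.mem_supMap.2 ⟨a, ha.1, b, hb.1, rfl⟩⟩
  · rintro ⟨hT, hS⟩
    obtain ⟨u, hu, v, hv, rfl⟩ := q.mem_supMap.1 hS
    have hT' : v + σ u ∈ (q.supMap σ).lieStabilizer := by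
      simpa only [map_add, hinv, add_comm] using hσT _ hT
    refine ⟨u, ?_, v, ?_, rfl⟩ <;> rw [leviKernel_eq, SetLike.mem_coe, LieSubalgebra.mem_inf]
    exacts [⟨hu, mem_lieStabilizer_of_add_map_mem hbr hu hv hT⟩,
      ⟨hv, mem_lieStabilizer_of_add_map_mem hbr hv hu hT'⟩]

end Levi

/-- the Levi-kernel `k(g,q)` is a Lie subalgebra of `g`, and
`k(g,q) + σ(k(g,q))` is a Lie subalgebra of `g` with
`q ∩ σ(q) ⊆ k(g,q) + σ(k(g,q)) ⊆ q + σ(q)`. -/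
theorem leviKernel_isLieSubalgebra
    (σ : L → L)
    (hadd : ∀ x y : L, σ (x + y) = σ x + σ y)
    (hsmul : ∀ (c : ℂ) (x : L), σ (c • x) = (starRingEnd ℂ) c • σ x)
    (hbr : ∀ x y : L, σ ⁅x, y⁆ = ⁅σ x, σ y⁆)
    (hinv : ∀ x : L, σ (σ x) = x)
    (q : LieSubalgebra ℂ L) :
    -- `k(g,q)` is a Lie subalgebra
    (∀ x ∈ leviKernel σ q, ∀ y ∈ leviKernel σ q, x + y ∈ leviKernel σ q) ∧
    (∀ c : ℂ, ∀ x ∈ leviKernel σ q, c • x ∈ leviKernel σ q) ∧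
    (∀ x ∈ leviKernel σ q, ∀ y ∈ leviKernel σ q, ⁅x, y⁆ ∈ leviKernel σ q) ∧
    -- `k(g,q) + σ(k(g,q))` is a Lie subalgebra
    (∀ x ∈ leviKernelSum σ q, ∀ y ∈ leviKernelSum σ q, x + y ∈ leviKernelSum σ q) ∧
    (∀ c : ℂ, ∀ x ∈ leviKernelSum σ q, c • x ∈ leviKernelSum σ q) ∧
    (∀ x ∈ leviKernelSum σ q, ∀ y ∈ leviKernelSum σ q, ⁅x, y⁆ ∈ leviKernelSum σ q) ∧
    -- `q ∩ σ(q) ⊆ k(g,q) + σ(k(g,q)) ⊆ q + σ(q)`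
    (∀ x : L, x ∈ q → σ x ∈ q → x ∈ leviKernelSum σ q) ∧
    (∀ x ∈ leviKernelSum σ q, memSumConj σ q x) := by
  let σ' : L →ₗ⋆[ℂ] L := ⟨⟨σ, hadd⟩, hsmul⟩
  set K := q ⊓ (q.supMap σ').lieStabilizer
  set K' := (q.supMap σ').lieStabilizerInf
  have hK : leviKernel σ q = K := leviKernel_eq σ' q
  have hK' : leviKernelSum σ q = K' := leviKernelSum_eq σ' q hbr hinv
  rw [hK, hK']
  refine ⟨fun _ hx _ hy => K.add_mem hx hy, fun c _ hx => K.smul_mem c hx,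
    fun _ hx _ hy => K.lie_mem hx hy, fun _ hx _ hy => K'.add_mem hx hy,
    fun c _ hx => K'.smul_mem c hx, fun _ hx _ hy => K'.lie_mem hx hy,
    fun x hx hσx => ?_, fun x hx => (memSumConj_iff σ' q).2 hx.2⟩
  exact ⟨mem_lieStabilizer_of_mem_of_map_mem (σ := σ') hbr hinv hx hσx, q.mem_supMap_of_mem hx⟩
end

section
/- Let R be a root system, Q ⊆ R a parabolic subset, and C₁, C₂ two Weyl chambers admissible for Q (R⁺(C_i) ⊆ Q for i = 1,2). Then there exist roots β₁,…,β_p ∈ Q^r = Q ∩ (−Q) such that the composition of reflections r_{β₁}∘⋯∘r_{β_p} maps R⁺(C₁) onto R⁺(C₂). -/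
open scoped RealInnerProductSpace

variable {V : Type*} [NormedAddCommGroup V] [InnerProductSpace ℝ V]

/-- `R` is a (finite, reduced) root system in the Euclidean space `V`. -/
def IsRootSys (R : Set V) : Prop :=
  R.Finite ∧ (0 : V) ∉ R ∧
  (∀ α ∈ R, ∀ β ∈ R, β - (2 * ⟪β, α⟫ / ⟪α, α⟫) • α ∈ R) ∧
  (∀ α ∈ R, ∀ β ∈ R, ∃ n : ℤ, 2 * ⟪β, α⟫ / ⟪α, α⟫ = (n : ℝ)) ∧
  (∀ α ∈ R, ∀ t : ℝ, t • α ∈ R → t = 1 ∨ t = -1)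

/-- `Q` is a parabolic subset of `R`. -/
def IsParabolicSet (R Q : Set V) : Prop :=
  Q ⊆ R ∧ (∀ α ∈ Q, ∀ β ∈ Q, α + β ∈ R → α + β ∈ Q) ∧ (∀ α ∈ R, α ∈ Q ∨ -α ∈ Q)

/-- The reflection in the hyperplane orthogonal to `β`. -/
noncomputable def rootReflection (β x : V) : V := x - (2 * ⟪x, β⟫ / ⟪β, β⟫) • β

/-!
Induction on the number of roots separating the chambers `C₂` and `C₁`. If some root is positive
on `C₂` but negative on `C₁`, take such a root `α` with `⟪α, v₂⟫` minimal. Then `α` is not a sum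
of two roots positive on `C₂`, so it is simple for `C₂`, and `r_α` permutes the roots positive on
`C₂` other than `α`: this is where the `α`-string through a root is used. Hence the chamber
`r_α C₂` is separated from `C₁` by one root fewer, and `r_α` maps its positive roots onto
`R⁺(C₂)`. Every reflection used is in a root `β` with `β ∈ R⁺(C₂)` and `-β ∈ R⁺(C₁)`, so that
admissibility of both chambers puts `β` and `-β` in `Q`.
-/

lemma real_inner_mul_inner_self_lt_of_ne_smul {x y : V} (hx : x ≠ 0) (hxy : ∀ t : ℝ, y ≠ t • x) :
    ⟪x, y⟫ * ⟪x, y⟫ < ⟪x, x⟫ * ⟪y, y⟫ := by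
  refine (real_inner_mul_inner_self_le x y).lt_of_ne fun h => ?_
  have hy : y ≠ 0 := by simpa using hxy 0
  have hnorm : ‖⟪x, y⟫‖ = ‖x‖ * ‖y‖ := by
    rw [Real.norm_eq_abs, ← sq_eq_sq₀ (abs_nonneg _) (by positivity), sq_abs, mul_pow,
      ← real_inner_self_eq_norm_sq, ← real_inner_self_eq_norm_sq, sq, h]
  obtain ⟨t, -, rfl⟩ := (norm_inner_eq_norm_iff hx hy).1 hnorm
  exact hxy t rfl

lemma real_inner_rootReflection_left (β x y : V) :
    ⟪rootReflection β x, y⟫ = ⟪x, rootReflection β y⟫ := by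
  simp only [rootReflection, inner_sub_left, inner_sub_right, real_inner_smul_left,
    real_inner_smul_right, real_inner_comm β y]
  ring

lemma rootReflection_rootReflection (β x : V) : rootReflection β (rootReflection β x) = x := by
  rcases eq_or_ne β 0 with rfl | hβ
  · simp [rootReflection]
  have hββ : ⟪β, β⟫ ≠ 0 := by simpa using hβ
  simp only [rootReflection, inner_sub_left, real_inner_smul_left]
  rw [sub_sub, ← add_smul, sub_eq_self, smul_eq_zero]
  left
  field_simp
  ring

lemma rootReflection_self {β : V} (hβ : β ≠ 0) : rootReflection β β = -β := by
  have hββ : ⟪β, β⟫ ≠ 0 := by simpa using hβ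
  rw [rootReflection, mul_div_assoc, div_self hββ, mul_one, two_smul, sub_add_cancel_left]

namespace IsRootSys

variable {R : Set V}

lemma ne_zero (hR : IsRootSys R) {α : V} (hα : α ∈ R) : α ≠ 0 :=
  fun h => hR.2.1 (h ▸ hα)

lemma inner_self_pos (hR : IsRootSys R) {α : V} (hα : α ∈ R) : 0 < ⟪α, α⟫ :=
  real_inner_self_pos.2 (hR.ne_zero hα)

lemma rootReflection_mem (hR : IsRootSys R) {α β : V} (hα : α ∈ R) (hβ : β ∈ R) :
    rootReflection α β ∈ R :=
  hR.2.2.1 α hα β hβ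

lemma neg_mem (hR : IsRootSys R) {α : V} (hα : α ∈ R) : -α ∈ R := by
  simpa [rootReflection_self (hR.ne_zero hα)] using hR.rootReflection_mem hα hα

lemma exists_int_rootReflection_eq (hR : IsRootSys R) {α β : V} (hα : α ∈ R) (hβ : β ∈ R) :
    ∃ n : ℤ, 2 * ⟪β, α⟫ = n * ⟪α, α⟫ ∧ rootReflection α β = β - (n : ℝ) • α := by
  obtain ⟨n, hn⟩ := hR.2.2.2.1 α hα β hβ
  refine ⟨n, ?_, by rw [rootReflection, hn]⟩
  rw [← hn, div_mul_cancel₀ _ (hR.inner_self_pos hα).ne']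

lemma ne_smul (hR : IsRootSys R) {α β : V} (hα : α ∈ R) (hβ : β ∈ R) (hβα : β ≠ α)
    (hβnα : β ≠ -α) (t : ℝ) : β ≠ t • α := by
  rintro rfl
  rcases hR.2.2.2.2 α hα t hβ with rfl | rfl
  · exact hβα (one_smul ℝ α)
  · exact hβnα (neg_one_smul ℝ α)

/-- The Cartan integers `n = 2⟪β, α⟫/⟪α, α⟫` and `m = 2⟪α, β⟫/⟪β, β⟫` are positive with
`n * m < 4`, so one of them is `1`, and then `r_α β = β - α` or `r_β α = α - β`. -/
lemma sub_mem (hR : IsRootSys R) {α β : V} (hα : α ∈ R) (hβ : β ∈ R)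
    (hpar : ∀ t : ℝ, β ≠ t • α) (hpos : 0 < ⟪β, α⟫) : β - α ∈ R := by
  obtain ⟨n, hn, hrβ⟩ := hR.exists_int_rootReflection_eq hα hβ
  obtain ⟨m, hm, hrα⟩ := hR.exists_int_rootReflection_eq hβ hα
  have hαα := hR.inner_self_pos hα
  have hββ := hR.inner_self_pos hβ
  rw [real_inner_comm] at hm
  have hn0 : (0 : ℝ) < n := pos_of_mul_pos_left (hn ▸ by positivity) hαα.le
  have hm0 : (0 : ℝ) < m := pos_of_mul_pos_left (hm ▸ by positivity) hββ.le
  have hcs := real_inner_mul_inner_self_lt_of_ne_smul (hR.ne_zero hα) hpar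
  rw [real_inner_comm] at hcs
  have hnm : (n * m : ℝ) < 4 := by nlinarith [mul_pos hαα hββ]
  have hnm' : n * m < 4 := by exact_mod_cast hnm
  have hn1 : 0 < n := by exact_mod_cast hn0
  have hm1 : 0 < m := by exact_mod_cast hm0
  rcases (show n = 1 ∨ m = 1 by
      by_contra! h
      have : 2 ≤ n := by omega
      have : 2 ≤ m := by omega
      nlinarith) with h | h
  · simpa [h, hrβ] using hR.rootReflection_mem hα hβ
  · simpa [h, hrα] using hR.neg_mem (hR.rootReflection_mem hβ hα)

/-- Up to the middle of the `α`-string through `β` each step is `sub_mem`; beyond it, `r_α`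
mirrors the first half. -/
lemma sub_nsmul_mem (hR : IsRootSys R) {α β : V} (hα : α ∈ R) (hβ : β ∈ R)
    (hpar : ∀ t : ℝ, β ≠ t • α) {n : ℕ} (hn : 2 * ⟪β, α⟫ = n * ⟪α, α⟫) :
    ∀ k ≤ n, β - (k : ℝ) • α ∈ R := by
  have hαα := hR.inner_self_pos hα
  intro k
  induction k using Nat.strong_induction_on with
  | _ k ih =>
    intro hk
    rcases k with _ | k
    · simpa using hβ
    by_cases hfirst : 2 * k < n
    · have hmem := hR.sub_mem hα (ih k k.lt_succ_self (by omega))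
        (fun t h => hpar (t + k) (by rw [add_smul, ← h, sub_add_cancel]))
        (by
          have : (2 * k : ℝ) < n := by exact_mod_cast hfirst
          rw [inner_sub_left, real_inner_smul_left]
          nlinarith)
      convert hmem using 1
      push_cast
      module
    · have hmirror := ih (n - (k + 1)) (by omega) (by omega)
      have hmem := hR.rootReflection_mem hα hmirror
      obtain ⟨c, hc, hrc⟩ := hR.exists_int_rootReflection_eq hα hmirror
      have hc' : (c : ℝ) = n - 2 * ((n - (k + 1) : ℕ) : ℝ) := by
        apply mul_right_cancel₀ hαα.ne'
        rw [← hc, inner_sub_left, real_inner_smul_left]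
        linarith
      rw [hrc, hc'] at hmem
      convert hmem using 1
      rw [Nat.cast_sub (by omega)]
      push_cast
      module

/-- Otherwise the `α`-string from `β` to `r_α β` changes sign between two consecutive terms, and
these exhibit `α` as a sum of two roots positive on `w`. -/
lemma inner_rootReflection_pos (hR : IsRootSys R) {w : V} (hw : ∀ γ ∈ R, ⟪γ, w⟫ ≠ 0)
    {α β : V} (hα : α ∈ R) (hαw : 0 < ⟪α, w⟫)
    (hsimple : ∀ x ∈ R, ∀ y ∈ R, 0 < ⟪x, w⟫ → 0 < ⟪y, w⟫ → x + y ≠ α)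
    (hβ : β ∈ R) (hβw : 0 < ⟪β, w⟫) (hβα : β ≠ α) : 0 < ⟪rootReflection α β, w⟫ := by
  by_contra hneg
  have hrneg : ⟪rootReflection α β, w⟫ < 0 :=
    (not_lt.1 hneg).lt_of_ne (hw _ (hR.rootReflection_mem hα hβ))
  obtain ⟨n, hn, hrβ⟩ := hR.exists_int_rootReflection_eq hα hβ
  rw [hrβ, inner_sub_left, real_inner_smul_left] at hrneg
  have hn0 : 0 ≤ n := by
    have : (0 : ℝ) < n := by nlinarith
    exact_mod_cast this.le
  lift n to ℕ using hn0
  push_cast at hn hrneg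
  have hβnα : β ≠ -α := by
    rintro rfl
    rw [inner_neg_left] at hβw
    linarith
  have hstring := hR.sub_nsmul_mem hα hβ (hR.ne_smul hα hβ hβα hβnα) hn
  have hnw : ⟪β - (n : ℝ) • α, w⟫ < 0 := by rwa [inner_sub_left, real_inner_smul_left]
  have hex : ∃ k : ℕ, ⟪β - (k : ℝ) • α, w⟫ < 0 := ⟨n, hnw⟩
  obtain ⟨k, hk⟩ : ∃ k, Nat.find hex = k + 1 :=
    Nat.exists_eq_add_one.2 ((Nat.find_pos hex).2 (by simpa using hβw.le))
  have hkn : k + 1 ≤ n := hk ▸ Nat.find_min' hex hnw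
  have hlast : ⟪β - ((k + 1 : ℕ) : ℝ) • α, w⟫ < 0 := hk ▸ Nat.find_spec hex
  have hprev : ¬ ⟪β - (k : ℝ) • α, w⟫ < 0 := Nat.find_min hex (by omega)
  have hxR := hstring k (by omega)
  have hyR := hR.neg_mem (hstring (k + 1) hkn)
  refine hsimple _ hxR _ hyR ((not_lt.1 hprev).lt_of_ne' (hw _ hxR)) ?_ ?_
  · rw [inner_neg_left]
    linarith
  · push_cast
    module

end IsRootSys

def positiveRoots (R : Set V) (w : V) : Set V := {x | x ∈ R ∧ 0 < ⟪x, w⟫}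

noncomputable def reflectionProduct (l : List V) : V → V :=
  l.foldr (fun β f => rootReflection β ∘ f) id

lemma add_ne_of_forall_inner_le {R : Set V} {v w α : V}
    (hα : α ∈ positiveRoots R w \ positiveRoots R v)
    (hmin : ∀ γ ∈ positiveRoots R w \ positiveRoots R v, ⟪α, w⟫ ≤ ⟪γ, w⟫) :
    ∀ x ∈ R, ∀ y ∈ R, 0 < ⟪x, w⟫ → 0 < ⟪y, w⟫ → x + y ≠ α := by
  rintro x hx y hy hxw hyw rfl
  have hαv : ⟪x, v⟫ + ⟪y, v⟫ ≤ 0 := by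
    rw [← inner_add_left]
    exact not_lt.1 fun h => hα.2 ⟨hα.1.1, h⟩
  have hsum : ⟪x + y, w⟫ = ⟪x, w⟫ + ⟪y, w⟫ := inner_add_left x y w
  rcases le_or_gt ⟪x, v⟫ 0 with hxv | hxv
  · linarith [hmin x ⟨⟨hx, hxw⟩, fun h => (h.2.trans_le hxv).false⟩]
  · linarith [hmin y ⟨⟨hy, hyw⟩, fun h => by linarith [h.2]⟩]

namespace IsRootSys

variable {R : Set V}

lemma neg_mem_positiveRoots (hR : IsRootSys R) {v β : V} (hv : ∀ γ ∈ R, ⟪γ, v⟫ ≠ 0)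
    (hβ : β ∈ R) (hβv : β ∉ positiveRoots R v) : -β ∈ positiveRoots R v := by
  have hle : ⟪β, v⟫ ≤ 0 := not_lt.1 fun h => hβv ⟨hβ, h⟩
  refine ⟨hR.neg_mem hβ, ?_⟩
  rw [inner_neg_left, neg_pos]
  exact hle.lt_of_ne (hv β hβ)

lemma positiveRoots_eq_of_subset (hR : IsRootSys R) {v w : V} (hw : ∀ γ ∈ R, ⟪γ, w⟫ ≠ 0)
    (h : positiveRoots R w ⊆ positiveRoots R v) : positiveRoots R w = positiveRoots R v := by
  refine h.antisymm fun β hβ => ?_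
  by_contra hβw
  have hneg := (h (hR.neg_mem_positiveRoots hw hβ.1 hβw)).2
  rw [inner_neg_left] at hneg
  linarith [hβ.2]

lemma inner_rootReflection_ne_zero (hR : IsRootSys R) {α w : V} (hα : α ∈ R)
    (hw : ∀ γ ∈ R, ⟪γ, w⟫ ≠ 0) : ∀ γ ∈ R, ⟪γ, rootReflection α w⟫ ≠ 0 := fun γ hγ => by
  rw [← real_inner_rootReflection_left]
  exact hw _ (hR.rootReflection_mem hα hγ)

lemma rootReflection_image_positiveRoots (hR : IsRootSys R) {α : V} (hα : α ∈ R) (w : V) :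
    rootReflection α '' positiveRoots R w = positiveRoots R (rootReflection α w) := by
  ext x
  constructor
  · rintro ⟨y, ⟨hyR, hyw⟩, rfl⟩
    refine ⟨hR.rootReflection_mem hα hyR, ?_⟩
    rwa [real_inner_rootReflection_left, rootReflection_rootReflection]
  · rintro ⟨hxR, hxw⟩
    refine ⟨rootReflection α x, ⟨hR.rootReflection_mem hα hxR, ?_⟩,
      rootReflection_rootReflection α x⟩
    rwa [real_inner_rootReflection_left]

lemma positiveRoots_rootReflection_subset (hR : IsRootSys R) {w α : V}
    (hw : ∀ γ ∈ R, ⟪γ, w⟫ ≠ 0) (hα : α ∈ R) (hαw : 0 < ⟪α, w⟫)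
    (hsimple : ∀ x ∈ R, ∀ y ∈ R, 0 < ⟪x, w⟫ → 0 < ⟪y, w⟫ → x + y ≠ α) :
    positiveRoots R (rootReflection α w) ⊆ insert (-α) (positiveRoots R w \ {α}) := by
  rintro γ ⟨hγ, hγw⟩
  rw [← real_inner_rootReflection_left] at hγw
  by_cases hγα : rootReflection α γ = α
  · left
    rw [← rootReflection_rootReflection α γ, hγα, rootReflection_self (hR.ne_zero hα)]
  right
  refine ⟨⟨hγ, ?_⟩, ?_⟩
  · simpa [rootReflection_rootReflection] using hR.inner_rootReflection_pos hw hα hαw hsimple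
      (hR.rootReflection_mem hα hγ) hγw hγα
  · rintro rfl
    rw [rootReflection_self (hR.ne_zero hα), inner_neg_left] at hγw
    linarith

lemma sdiff_positiveRoots_rootReflection_ssubset (hR : IsRootSys R) {v w α : V}
    (hv : ∀ γ ∈ R, ⟪γ, v⟫ ≠ 0) (hw : ∀ γ ∈ R, ⟪γ, w⟫ ≠ 0)
    (hα : α ∈ positiveRoots R w \ positiveRoots R v)
    (hmin : ∀ γ ∈ positiveRoots R w \ positiveRoots R v, ⟪α, w⟫ ≤ ⟪γ, w⟫) :
    positiveRoots R (rootReflection α w) \ positiveRoots R v ⊂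
      positiveRoots R w \ positiveRoots R v := by
  refine lt_of_le_of_lt (fun γ ⟨hγw, hγv⟩ => ?_) (Set.sdiff_singleton_ssubset.2 hα)
  have hsimple := add_ne_of_forall_inner_le hα hmin
  rcases hR.positiveRoots_rootReflection_subset hw hα.1.1 hα.1.2 hsimple hγw with
    rfl | ⟨hγw', hγα⟩
  · exact absurd (hR.neg_mem_positiveRoots hv hα.1.1 hα.2) hγv
  · exact ⟨⟨hγw', hγv⟩, hγα⟩

theorem exists_reflectionProduct_image_positiveRoots (hR : IsRootSys R) {v w : V}
    (hv : ∀ γ ∈ R, ⟪γ, v⟫ ≠ 0) (hw : ∀ γ ∈ R, ⟪γ, w⟫ ≠ 0) :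
    ∃ l : List V, (∀ β ∈ l, β ∈ positiveRoots R w \ positiveRoots R v) ∧
      reflectionProduct l '' positiveRoots R v = positiveRoots R w := by
  induction hn : (positiveRoots R w \ positiveRoots R v).ncard using Nat.strong_induction_on
    generalizing w with
  | _ n ih =>
  rcases (positiveRoots R w \ positiveRoots R v).eq_empty_or_nonempty with hempty | hne
  · refine ⟨[], by simp, ?_⟩
    rw [reflectionProduct, List.foldr_nil, Set.image_id]
    exact (hR.positiveRoots_eq_of_subset hw (Set.sdiff_eq_empty.1 hempty)).symm
  have hfin : (positiveRoots R w \ positiveRoots R v).Finite := hR.1.subset fun x hx => hx.1.1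
  obtain ⟨α, hα, hmin⟩ := Set.exists_min_image _ (fun γ => ⟪γ, w⟫) hfin hne
  have hssub := hR.sdiff_positiveRoots_rootReflection_ssubset hv hw hα hmin
  obtain ⟨l, hl, himg⟩ := ih _ (hn ▸ Set.ncard_lt_ncard hssub hfin)
    (hR.inner_rootReflection_ne_zero hα.1.1 hw) rfl
  refine ⟨α :: l, List.forall_mem_cons.2 ⟨hα, fun β hβ => hssub.subset (hl β hβ)⟩, ?_⟩
  change (rootReflection α ∘ reflectionProduct l) '' _ = _
  rw [Set.image_comp, himg, hR.rootReflection_image_positiveRoots hα.1.1,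
    rootReflection_rootReflection]

end IsRootSys

theorem admissible_chambers_conjugate_general
    (R Q : Set V) (hR : IsRootSys R)
    (v₁ v₂ : V)
    (hreg₁ : ∀ α ∈ R, ⟪α, v₁⟫ ≠ 0) (hreg₂ : ∀ α ∈ R, ⟪α, v₂⟫ ≠ 0)
    (hadm₁ : ∀ α ∈ R, 0 < ⟪α, v₁⟫ → α ∈ Q) (hadm₂ : ∀ α ∈ R, 0 < ⟪α, v₂⟫ → α ∈ Q) :
    ∃ l : List V, (∀ β ∈ l, β ∈ Q ∧ -β ∈ Q) ∧
      (l.foldr (fun β f => rootReflection β ∘ f) id) ''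
          {x | x ∈ R ∧ 0 < ⟪x, v₁⟫} = {x | x ∈ R ∧ 0 < ⟪x, v₂⟫} := by
  obtain ⟨l, hl, himg⟩ := hR.exists_reflectionProduct_image_positiveRoots hreg₁ hreg₂
  refine ⟨l, fun β hβ => ?_, himg⟩
  obtain ⟨⟨hβR, hβ₂⟩, hβ₁⟩ := hl β hβ
  obtain ⟨hnegR, hneg₁⟩ := hR.neg_mem_positiveRoots hreg₁ hβR hβ₁
  exact ⟨hadm₂ β hβR hβ₂, hadm₁ (-β) hnegR hneg₁⟩

/-- if `C₁, C₂` (described by regular vectors `v₁, v₂`) are two Weyl chambers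
admissible for the parabolic set `Q`, there exist roots `β₁, …, β_p ∈ Q^r` whose composed
reflections `r_{β₁} ∘ ⋯ ∘ r_{β_p}` map `R⁺(C₁)` onto `R⁺(C₂)`. -/
theorem admissible_chambers_conjugate
    (R Q : Set V) (hR : IsRootSys R) (hQ : IsParabolicSet R Q)
    (v₁ v₂ : V)
    (hreg₁ : ∀ α ∈ R, ⟪α, v₁⟫ ≠ 0) (hreg₂ : ∀ α ∈ R, ⟪α, v₂⟫ ≠ 0)
    (hadm₁ : ∀ α ∈ R, 0 < ⟪α, v₁⟫ → α ∈ Q) (hadm₂ : ∀ α ∈ R, 0 < ⟪α, v₂⟫ → α ∈ Q) :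
    ∃ l : List V, (∀ β ∈ l, β ∈ Q ∧ -β ∈ Q) ∧
      (l.foldr (fun β f => rootReflection β ∘ f) id) ''
          {x | x ∈ R ∧ 0 < ⟪x, v₁⟫} = {x | x ∈ R ∧ 0 < ⟪x, v₂⟫} :=
  admissible_chambers_conjugate_general R Q hR v₁ v₂ hreg₁ hreg₂ hadm₁ hadm₂
end
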